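/- Let ψ(x) = φ(x)/Φ(x) with φ, Φ the standard Gaussian density and CDF, and let ψ^{-1} denote its inverse function (ψ is a strictly decreasing bijection from ℝ onto (0,∞)). Then for all x > 0 and all β > 1, one has β·ψ'(ψ^{-1}(x)) < ψ'(ψ^{-1}(βx)). -/

import Mathlib

/-!
Since ψ' = -ψ (ψ + id), with a = ψ⁻¹(βx) < b = ψ⁻¹(x) the inequality becomes
ψ(a) + a < ψ(b) + b. So it suffices that (ψ + id)' = 1 - ψ (ψ + y) is positive, which after
clearing denominators is positivity of G = Φ² - φ² - yφΦ. Positivity of G, of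
G' / φ = (1 + y²)Φ + yφ and of its half-derivative φ + yΦ all follow from one principle:
each has a positive derivative and vanishes at -∞.
-/

open Real Set

noncomputable def stdGaussPDF (x : ℝ) : ℝ :=
  (Real.sqrt (2 * Real.pi))⁻¹ * Real.exp (-x ^ 2 / 2)

noncomputable def stdGaussCDF (x : ℝ) : ℝ :=
  ∫ u in Set.Iic x, stdGaussPDF u

/-- The inverse Mill's ratio ψ(x) = φ(x)/Φ(x). -/
noncomputable def psiMill (x : ℝ) : ℝ := stdGaussPDF x / stdGaussCDF x

open MeasureTheory Filter Topology

lemma pos_of_hasDerivAt_pos_of_tendsto_atBot {f f' : ℝ → ℝ}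
    (hf : ∀ x, HasDerivAt f (f' x) x) (hf' : ∀ x, 0 < f' x)
    (hlim : Tendsto f atBot (𝓝 0)) (y : ℝ) : 0 < f y := by
  have hmono : StrictMono f := strictMono_of_hasDerivAt_pos hf hf'
  have hle : 0 ≤ f (y - 1) :=
    le_of_tendsto hlim <| (eventually_le_atBot (y - 1)).mono fun z hz => hmono.monotone hz
  exact hle.trans_lt (hmono (by linarith))

lemma tendsto_pow_mul_atBot_of_le_mul_exp {h : ℝ → ℝ} (k : ℕ) (c : ℝ)
    (h0 : ∀ y, 0 ≤ h y) (hle : ∀ y, h y ≤ c * exp y) :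
    Tendsto (fun y => y ^ k * h y) atBot (𝓝 0) := by
  have hexp : Tendsto (fun y : ℝ => c * ((-y) ^ k * exp y)) atBot (𝓝 0) := by
    have h := ((tendsto_pow_mul_exp_neg_atTop_nhds_zero k).comp
      tendsto_neg_atBot_atTop).const_mul c
    simpa [Function.comp_def] using h
  refine squeeze_zero_norm' ?_ hexp
  filter_upwards [eventually_le_atBot (0 : ℝ)] with y hy
  rw [norm_mul, norm_pow, Real.norm_eq_abs, Real.norm_eq_abs, abs_of_nonpos hy,
    abs_of_nonneg (h0 y)]
  calc (-y) ^ k * h y ≤ (-y) ^ k * (c * exp y) :=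
        mul_le_mul_of_nonneg_left (hle y) (pow_nonneg (by linarith) k)
    _ = c * ((-y) ^ k * exp y) := by ring

lemma stdGaussPDF_pos (x : ℝ) : 0 < stdGaussPDF x := by
  unfold stdGaussPDF
  positivity

lemma continuous_stdGaussPDF : Continuous stdGaussPDF := by
  unfold stdGaussPDF
  fun_prop

lemma integrable_stdGaussPDF : Integrable stdGaussPDF := by
  refine ((integrable_exp_neg_mul_sq (b := 1 / 2) (by norm_num)).const_mul
    (Real.sqrt (2 * Real.pi))⁻¹).congr (Eventually.of_forall fun x => ?_)
  simp only [stdGaussPDF]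
  ring_nf

lemma hasDerivAt_stdGaussPDF (x : ℝ) : HasDerivAt stdGaussPDF (-x * stdGaussPDF x) x := by
  have h : HasDerivAt (fun y : ℝ => -y ^ 2 / 2) (-x) x :=
    ((hasDerivAt_pow 2 x).neg.div_const 2).congr_deriv (by norm_num; ring)
  exact (h.exp.const_mul _).congr_deriv (by unfold stdGaussPDF; ring)

lemma stdGaussPDF_le_mul_exp (x : ℝ) : stdGaussPDF x ≤ exp (1 / 2) * exp x := by
  have hc : (Real.sqrt (2 * Real.pi))⁻¹ ≤ 1 :=
    inv_le_one_of_one_le₀ (Real.one_le_sqrt.2 (by linarith [Real.pi_gt_three]))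
  rw [← exp_add]
  calc stdGaussPDF x ≤ 1 * exp (-x ^ 2 / 2) :=
        mul_le_mul_of_nonneg_right hc (exp_pos _).le
    _ ≤ exp (1 / 2 + x) := by
        rw [one_mul, exp_le_exp]
        nlinarith [sq_nonneg (x + 1)]

lemma stdGaussCDF_pos (x : ℝ) : 0 < stdGaussCDF x := by
  unfold stdGaussCDF
  rw [setIntegral_pos_iff_support_of_nonneg_ae
    (Eventually.of_forall fun y => (stdGaussPDF_pos y).le) integrable_stdGaussPDF.integrableOn,
    Function.support_eq_univ fun y => (stdGaussPDF_pos y).ne', univ_inter]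
  simp

lemma stdGaussCDF_le_mul_exp (x : ℝ) : stdGaussCDF x ≤ exp (1 / 2) * exp x :=
  calc stdGaussCDF x ≤ ∫ u in Iic x, exp (1 / 2) * exp u :=
        setIntegral_mono_on integrable_stdGaussPDF.integrableOn
          ((integrableOn_exp_Iic x).const_mul _) measurableSet_Iic
          fun u _ => stdGaussPDF_le_mul_exp u
    _ = exp (1 / 2) * exp x := by rw [integral_const_mul, integral_exp_Iic]

lemma hasDerivAt_stdGaussCDF (x : ℝ) : HasDerivAt stdGaussCDF (stdGaussPDF x) x := by
  have hsplit : stdGaussCDF = fun u => stdGaussCDF 0 + ∫ t in (0 : ℝ)..u, stdGaussPDF t := by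
    funext u
    rw [stdGaussCDF, stdGaussCDF, ← intervalIntegral.integral_Iic_sub_Iic
      integrable_stdGaussPDF.integrableOn integrable_stdGaussPDF.integrableOn]
    ring
  rw [hsplit]
  exact (intervalIntegral.integral_hasDerivAt_right
    (integrable_stdGaussPDF.intervalIntegrable (a := 0) (b := x))
    (continuous_stdGaussPDF.stronglyMeasurableAtFilter _ _)
    continuous_stdGaussPDF.continuousAt).const_add _

lemma tendsto_pow_mul_stdGaussPDF_atBot (k : ℕ) :
    Tendsto (fun y => y ^ k * stdGaussPDF y) atBot (𝓝 0) :=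
  tendsto_pow_mul_atBot_of_le_mul_exp k _ (fun y => (stdGaussPDF_pos y).le) stdGaussPDF_le_mul_exp

lemma tendsto_pow_mul_stdGaussCDF_atBot (k : ℕ) :
    Tendsto (fun y => y ^ k * stdGaussCDF y) atBot (𝓝 0) :=
  tendsto_pow_mul_atBot_of_le_mul_exp k _ (fun y => (stdGaussCDF_pos y).le) stdGaussCDF_le_mul_exp

lemma stdGaussPDF_add_mul_stdGaussCDF_pos (y : ℝ) :
    0 < stdGaussPDF y + y * stdGaussCDF y := by
  refine pos_of_hasDerivAt_pos_of_tendsto_atBot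
    (f := fun z => stdGaussPDF z + z * stdGaussCDF z) (f' := stdGaussCDF) (fun z => ?_)
    stdGaussCDF_pos ?_ y
  · exact ((hasDerivAt_stdGaussPDF z).add
      ((hasDerivAt_id' z).mul (hasDerivAt_stdGaussCDF z))).congr_deriv (by ring)
  · simpa using (tendsto_pow_mul_stdGaussPDF_atBot 0).add (tendsto_pow_mul_stdGaussCDF_atBot 1)

lemma one_add_sq_mul_stdGaussCDF_add_mul_stdGaussPDF_pos (y : ℝ) :
    0 < (1 + y ^ 2) * stdGaussCDF y + y * stdGaussPDF y := by
  refine pos_of_hasDerivAt_pos_of_tendsto_atBot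
    (f := fun z => (1 + z ^ 2) * stdGaussCDF z + z * stdGaussPDF z)
    (f' := fun z => 2 * (stdGaussPDF z + z * stdGaussCDF z)) (fun z => ?_)
    (fun z => by linarith [stdGaussPDF_add_mul_stdGaussCDF_pos z]) ?_ y
  · exact ((((hasDerivAt_pow 2 z).const_add 1).mul (hasDerivAt_stdGaussCDF z)).add
      ((hasDerivAt_id' z).mul (hasDerivAt_stdGaussPDF z))).congr_deriv (by norm_num; ring)
  · have h := ((tendsto_pow_mul_stdGaussCDF_atBot 0).add
      (tendsto_pow_mul_stdGaussCDF_atBot 2)).add (tendsto_pow_mul_stdGaussPDF_atBot 1)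
    simp only [pow_zero, pow_one, one_mul, add_zero] at h
    exact h.congr fun z => by ring

lemma stdGaussCDF_sq_sub_stdGaussPDF_sq_sub_mul_pos (y : ℝ) :
    0 < stdGaussCDF y ^ 2 - stdGaussPDF y ^ 2 - y * stdGaussPDF y * stdGaussCDF y := by
  refine pos_of_hasDerivAt_pos_of_tendsto_atBot
    (f := fun z => stdGaussCDF z ^ 2 - stdGaussPDF z ^ 2 - z * stdGaussPDF z * stdGaussCDF z)
    (f' := fun z => stdGaussPDF z * ((1 + z ^ 2) * stdGaussCDF z + z * stdGaussPDF z))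
    (fun z => ?_)
    (fun z => mul_pos (stdGaussPDF_pos z) (one_add_sq_mul_stdGaussCDF_add_mul_stdGaussPDF_pos z))
    ?_ y
  · exact ((((hasDerivAt_stdGaussCDF z).pow 2).sub ((hasDerivAt_stdGaussPDF z).pow 2)).sub
      (((hasDerivAt_id' z).mul (hasDerivAt_stdGaussPDF z)).mul
        (hasDerivAt_stdGaussCDF z))).congr_deriv (by norm_num; ring)
  · have hΦ := tendsto_pow_mul_stdGaussCDF_atBot 0
    have hφ := tendsto_pow_mul_stdGaussPDF_atBot 0
    have h := ((hΦ.mul hΦ).sub (hφ.mul hφ)).sub ((tendsto_pow_mul_stdGaussPDF_atBot 1).mul hΦ)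
    simp only [pow_zero, pow_one, one_mul, mul_zero, sub_zero] at h
    exact h.congr fun z => by ring

lemma psiMill_pos (y : ℝ) : 0 < psiMill y := div_pos (stdGaussPDF_pos y) (stdGaussCDF_pos y)

lemma hasDerivAt_psiMill (y : ℝ) : HasDerivAt psiMill (-psiMill y * (psiMill y + y)) y := by
  have hΦ := (stdGaussCDF_pos y).ne'
  refine ((hasDerivAt_stdGaussPDF y).div (hasDerivAt_stdGaussCDF y) hΦ).congr_deriv ?_
  simp only [psiMill]
  field_simp
  ring

lemma psiMill_add_self_pos (y : ℝ) : 0 < psiMill y + y := by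
  have h : psiMill y + y = (stdGaussPDF y + y * stdGaussCDF y) / stdGaussCDF y := by
    simp only [psiMill]
    field_simp [(stdGaussCDF_pos y).ne']
  rw [h]
  exact div_pos (stdGaussPDF_add_mul_stdGaussCDF_pos y) (stdGaussCDF_pos y)

lemma psiMill_mul_psiMill_add_self_lt_one (y : ℝ) : psiMill y * (psiMill y + y) < 1 := by
  have hΦ := stdGaussCDF_pos y
  have h : psiMill y * (psiMill y + y)
      = (stdGaussPDF y ^ 2 + y * stdGaussPDF y * stdGaussCDF y) / stdGaussCDF y ^ 2 := by
    simp only [psiMill]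
    field_simp
  rw [h, div_lt_one (by positivity)]
  linarith [stdGaussCDF_sq_sub_stdGaussPDF_sq_sub_mul_pos y]

lemma strictAnti_psiMill : StrictAnti psiMill :=
  strictAnti_of_hasDerivAt_neg hasDerivAt_psiMill fun y => by
    nlinarith [mul_pos (psiMill_pos y) (psiMill_add_self_pos y)]

lemma strictMono_psiMill_add_self : StrictMono fun y => psiMill y + y :=
  strictMono_of_hasDerivAt_pos (fun y => (hasDerivAt_psiMill y).add (hasDerivAt_id' y))
    fun y => by linarith [psiMill_mul_psiMill_add_self_lt_one y]

theorem psiMill_deriv_inverse_ineq_general (g : ℝ → ℝ)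
    (hg : ∀ x : ℝ, 0 < x → psiMill (g x) = x) :
    ∀ x : ℝ, 0 < x → ∀ β : ℝ, 1 < β →
      β * deriv psiMill (g x) < deriv psiMill (g (β * x)) := by
  intro x hx β hβ
  have hψb : psiMill (g x) = x := hg x hx
  have hψa : psiMill (g (β * x)) = β * x := hg (β * x) (by positivity)
  have hab : g (β * x) < g x := by
    rw [← strictAnti_psiMill.lt_iff_gt, hψa, hψb]
    exact lt_mul_of_one_lt_left hx hβ
  have hF := strictMono_psiMill_add_self hab
  simp only [hψa, hψb] at hF
  rw [(hasDerivAt_psiMill _).deriv, (hasDerivAt_psiMill _).deriv, hψa, hψb]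
  linarith [mul_lt_mul_of_pos_left hF (by positivity : 0 < β * x)]

theorem psiMill_deriv_inverse_ineq (g : ℝ → ℝ)
    (hg : ∀ x : ℝ, 0 < x → psiMill (g x) = x)
    (hg' : ∀ y : ℝ, g (psiMill y) = y) :
    ∀ x : ℝ, 0 < x → ∀ β : ℝ, 1 < β →
      β * deriv psiMill (g x) < deriv psiMill (g (β * x)) :=
  psiMill_deriv_inverse_ineq_general g hg
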